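/- Let x ⊆ ⟦n⟧_{j+1}, x̄ ⊆ ⟦n⟧_{j+2}, and suppose x̄⊖ ∪ x⊙ (as a subset of ⟦n+1⟧) is well-formed. Then x̄⁻ ∩ x = ∅. -/
import Mathlib


/-- The three symbols `⊖`, `⊙`, `⊕`. -/
inductive CSym : Type
  | minus : CSym
  | mid : CSym
  | plus : CSym
deriving DecidableEq

/-- `Str n j` is `⟦n⟧_j`: strings of length `n` over `{⊖,⊙,⊕}` with exactly `j`
occurrences of `⊙`. -/
def Str (n j : ℕ) : Type := {l : List CSym // l.length = n ∧ l.count CSym.mid = j}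

/-- The even faces `a⁺` of `a ∈ ⟦n⟧_{j+1}`: replace the `i`-th occurrence of `⊙`
by `⊕` if `i` is odd (i.e. the number of earlier `⊙`'s is even), and by `⊖` if
`i` is even. -/
def posF {n j : ℕ} (a : Str n (j+1)) : Set (Str n j) :=
  {b | ∃ (q : ℕ) (h : q < a.1.length), a.1.get ⟨q, h⟩ = CSym.mid ∧
    b.1 = a.1.set q (if Even ((a.1.take q).count CSym.mid) then CSym.plus else CSym.minus)}

/-- The odd faces `a⁻` of `a ∈ ⟦n⟧_{j+1}`: replace the `i`-th occurrence of `⊙`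
by `⊖` if `i` is odd, and by `⊕` if `i` is even. -/
def negF {n j : ℕ} (a : Str n (j+1)) : Set (Str n j) :=
  {b | ∃ (q : ℕ) (h : q < a.1.length), a.1.get ⟨q, h⟩ = CSym.mid ∧
    b.1 = a.1.set q (if Even ((a.1.take q).count CSym.mid) then CSym.minus else CSym.plus)}

def sPos {n j : ℕ} (ξ : Set (Str n (j+1))) : Set (Str n j) := ⋃ a ∈ ξ, posF a
def sNeg {n j : ℕ} (ξ : Set (Str n (j+1))) : Set (Str n j) := ⋃ a ∈ ξ, negF a

/-- Append `⊖` to a string. -/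
def appM {n j : ℕ} (a : Str n j) : Str (n+1) j :=
  ⟨a.1 ++ [CSym.minus], by
    refine ⟨by simp [a.2.1], ?_⟩
    simp [List.count_append, a.2.2, List.count_singleton]⟩

/-- Append `⊕` to a string. -/
def appP {n j : ℕ} (a : Str n j) : Str (n+1) j :=
  ⟨a.1 ++ [CSym.plus], by
    refine ⟨by simp [a.2.1], ?_⟩
    simp [List.count_append, a.2.2, List.count_singleton]⟩

/-- Append `⊙` to a string. -/
def appO {n j : ℕ} (a : Str n j) : Str (n+1) (j+1) :=
  ⟨a.1 ++ [CSym.mid], by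
    refine ⟨by simp [a.2.1], ?_⟩
    simp [List.count_append, a.2.2, List.count_singleton]⟩

/-- A subset of `⟦n⟧_{j+1}` is well-formed if distinct elements share no even
face and no odd face. -/
def WfC {n j : ℕ} (ξ : Set (Str n (j+1))) : Prop :=
  ∀ a ∈ ξ, ∀ b ∈ ξ, a ≠ b → posF a ∩ posF b = ∅ ∧ negF a ∩ negF b = ∅

/-- `ξ` moves `μ` to `π`. -/
def MovesC {n j : ℕ} (ξ : Set (Str n (j+1))) (μ π : Set (Str n j)) : Prop :=
  π = (μ ∪ sPos ξ) \ sNeg ξ ∧ μ = (π ∪ sNeg ξ) \ sPos ξ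

/-- If `x̄⊖ ∪ x⊙` is well-formed, then `x̄⁻ ∩ x = ∅` (for `j` odd, so that
the appended `⊙` receives a `⊖` replacement). -/
theorem cube_wf_neg_disjoint (n j : ℕ) (hj : Odd j)
    (x : Set (Str n (j+1))) (xb : Set (Str n (j+2)))
    (h : WfC (appM '' xb ∪ appO '' x)) :
    sNeg xb ∩ x = ∅ := by
  ext b
  simp only [Set.mem_inter_iff, Set.mem_empty_iff_false, iff_false, not_and]
  intro hbneg hbx
  simp only [sNeg, Set.mem_iUnion] at hbneg
  obtain ⟨a, ha, q, hq, hget, hset⟩ := hbneg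
  simp only [List.get_eq_getElem] at hget
  have hlen : a.1.length = n := a.2.1
  have hblen : b.1.length = n := b.2.1
  have hqn : q < n := hlen ▸ hq
  -- appM b ∈ negF (appM a)
  have h1 : appM b ∈ negF (appM a) := by
    simp only [negF, appM, Set.mem_setOf_eq, List.get_eq_getElem]
    refine ⟨q, by simp; omega, ?_, ?_⟩
    · rw [List.getElem_append_left (by omega)]
      exact hget
    · have ht : List.take q (a.1 ++ [CSym.minus]) = List.take q a.1 :=
        List.take_append_of_le_length (by omega)
      rw [List.set_append_left _ _ (by omega)]
      simp only [ht]
      rw [← hset]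
  -- appM b ∈ negF (appO b)
  have h2 : appM b ∈ negF (appO b) := by
    simp only [negF, appO, appM, Set.mem_setOf_eq, List.get_eq_getElem]
    refine ⟨n, by simp; omega, ?_, ?_⟩
    · rw [List.getElem_append_right (by omega)]
      simp [hblen]
    · have ht : List.take n (b.1 ++ [CSym.mid]) = b.1 := by
        rw [List.take_append_of_le_length (by omega)]
        exact List.take_of_length_le (by omega)
      simp only [ht, b.2.2]
      rw [if_pos (by obtain ⟨k, hk⟩ := hj; exact ⟨k+1, by omega⟩ : Even (j+1)),
        List.set_append_right _ _ (by omega)]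
      simp [hblen]
  have hmem1 : appM a ∈ appM '' xb ∪ appO '' x := Or.inl ⟨a, ha, rfl⟩
  have hmem2 : appO b ∈ appM '' xb ∪ appO '' x := Or.inr ⟨b, hbx, rfl⟩
  have hne : appM a ≠ appO b := by
    intro heq
    have h' : a.1 ++ [CSym.minus] = b.1 ++ [CSym.mid] := congrArg Subtype.val heq
    have := List.append_inj_right h' (by omega)
    simp at this
  have := (h _ hmem1 _ hmem2 hne).2
  exact absurd (Set.mem_inter h1 h2) (by rw [this]; exact Set.notMem_empty _)
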